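/- For all n ∈ ℕ and k ∈ ℕ: T^async_n and T'^async_n are (k,𝕏ⁿ)-equivalent, and T^async_n|_a and T'^async_n|_a are (k,𝕏ⁿ)-equivalent, where the witnessing trace equivalence is the n-stutter equivalence ≈ₙ. -/

import Mathlib

/-- The alphabet `{a, x, y, z}`. -/
inductive AXYZ : Type where
  | a : AXYZ
  | x : AXYZ
  | y : AXYZ
  | z : AXYZ
deriving DecidableEq

/-- The valuation `a ↦ b₀, x ↦ b₁, y ↦ b₂, z ↦ b₃`, written as the bit string
`b₀b₁b₂b₃`. -/
def vA (b₀ b₁ b₂ b₃ : Bool) : AXYZ → Bool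
  | .a => b₀
  | .x => b₁
  | .y => b₂
  | .z => b₃

/-- The infinite trace consisting of the given finite blocks (each block is a number of
repetitions of a valuation) followed by a constant tail. -/
def ofBlocks : List (ℕ × (AXYZ → Bool)) → (AXYZ → Bool) → ℕ → AXYZ → Bool
  | [], tail, _ => tail
  | (c, v) :: rest, tail, i => if i < c then v else ofBlocks rest tail (i - c)

/-- The block sequence `τ₀ = 1110 (1000)^{n+4} (1001)^{n+4} 1111 (1001)^{n+4} (1000)^{n+4}`. -/
def tau0blocks (n : ℕ) : List (ℕ × (AXYZ → Bool)) :=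
  [(1, vA true true true false), (n + 4, vA true false false false),
   (n + 4, vA true false false true), (1, vA true true true true),
   (n + 4, vA true false false true), (n + 4, vA true false false false)]

/-- The block sequence `τ₁ = 1111 (1001)^{n+4} (1000)^{n+4} 1110 (1000)^{n+4} (1001)^{n+4}`. -/
def tau1blocks (n : ℕ) : List (ℕ × (AXYZ → Bool)) :=
  [(1, vA true true true true), (n + 4, vA true false false true),
   (n + 4, vA true false false false), (1, vA true true true false),
   (n + 4, vA true false false false), (n + 4, vA true false false true)]

/-- `t₁ = 0000 τ₁ (1001)^ω`. -/
def t1 (n : ℕ) : ℕ → AXYZ → Bool :=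
  ofBlocks ((1, vA false false false false) :: tau1blocks n) (vA true false false true)

/-- `t₂ = 0010 τ₁ (1001)^{n+4} (1111)^ω`. -/
def t2 (n : ℕ) : ℕ → AXYZ → Bool :=
  ofBlocks (((1, vA false false true false) :: tau1blocks n) ++
    [(n + 4, vA true false false true)]) (vA true true true true)

/-- `t₃ = (0000)^{n+4} τ₀ (1001)^ω`. -/
def t3 (n : ℕ) : ℕ → AXYZ → Bool :=
  ofBlocks ((n + 4, vA false false false false) :: tau0blocks n) (vA true false false true)

/-- `t₄ = (0010)^{n+4} τ₀ (1111)^ω`. -/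
def t4 (n : ℕ) : ℕ → AXYZ → Bool :=
  ofBlocks ((n + 4, vA false false true false) :: tau0blocks n) (vA true true true true)

/-- `T^async_n = {t₁, t₂, t₃, t₄}`. -/
def Tasync (n : ℕ) : Set (ℕ → AXYZ → Bool) := {t1 n, t2 n, t3 n, t4 n}

/-- `tᵢ'`: the trace `tᵢ` with the valuation at position `2n+11` deleted. -/
def tdel (n : ℕ) (t : ℕ → AXYZ → Bool) : ℕ → AXYZ → Bool :=
  fun m => if m < 2 * n + 11 then t m else t (m + 1)

/-- `T'^async_n = {t₁', t₂', t₃', t₄'}`. -/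
def Tasync' (n : ℕ) : Set (ℕ → AXYZ → Bool) :=
  {tdel n (t1 n), tdel n (t2 n), tdel n (t3 n), tdel n (t4 n)}

/-- The alphabet `{x, y, z}` (the variable `a` hidden). -/
inductive XYZ : Type where
  | x : XYZ
  | y : XYZ
  | z : XYZ
deriving DecidableEq

/-- Restriction of a valuation over `{a,x,y,z}` to `{x,y,z}`. -/
def restr (v : AXYZ → Bool) : XYZ → Bool
  | .x => v AXYZ.x
  | .y => v AXYZ.y
  | .z => v AXYZ.z

/-- `T|_a`: the set obtained from `T` by deleting the variable `a` from every
valuation. -/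
def restrSet (T : Set (ℕ → AXYZ → Bool)) : Set (ℕ → XYZ → Bool) :=
  (fun τ => fun i => restr (τ i)) '' T

/-- Flattening of a trace assignment: an infinite trace over the alphabet `X × ℕ`
(`false` on pairs `(a, π)` with `π` outside the domain of the assignment). -/
def flat {X : Type} {T : Set (ℕ → X → Bool)} (Θ : ℕ → Option ↥T) : ℕ → (X × ℕ) → Bool :=
  fun i p => ((Θ p.2).map (fun τ => τ.1 i p.1)).getD false

/-- The domain of the assignment consists of exactly `k` trace variables. -/
def HasDomCard {X : Type} {T : Set (ℕ → X → Bool)} (Θ : ℕ → Option ↥T) (k : ℕ) : Prop :=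
  ∃ s : Finset ℕ, (∀ π, (Θ π).isSome ↔ π ∈ s) ∧ s.card = k

/-- Composition `f ∘ Θ` of a bijection `f : T → T'` with an assignment over `T`. -/
def mapAssign {X : Type} {T T' : Set (ℕ → X → Bool)} (f : ↥T ≃ ↥T') (Θ : ℕ → Option ↥T) :
    ℕ → Option ↥T' := fun π => (Θ π).map f

/-- The valuation at position `i` of `τ` is `n`-redundant: it is repeated for the next
`n+1` positions. -/
def Redundant {A : Type} (n : ℕ) (τ : ℕ → A → Bool) (i : ℕ) : Prop :=
  ∀ j, 1 ≤ j → j ≤ n + 1 → τ i = τ (i + j)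

/-- Deletion of the valuation at position `i` of an infinite trace. -/
def deleteAt {A : Type} (τ : ℕ → A → Bool) (i : ℕ) : ℕ → A → Bool :=
  fun m => if m < i then τ m else τ (m + 1)

/-- `τ ≺ₙ τ'`: `τ` is obtained from `τ'` by deleting one `n`-redundant valuation. -/
def StutterStep {A : Type} (n : ℕ) (τ τ' : ℕ → A → Bool) : Prop :=
  ∃ i, Redundant n τ' i ∧ τ = deleteAt τ' i

/-- `n`-stutter equivalence `≈ₙ`: the least equivalence relation containing `≺ₙ`. -/
def NStutterEquiv {A : Type} (n : ℕ) : (ℕ → A → Bool) → (ℕ → A → Bool) → Prop :=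
  Relation.EqvGen (StutterStep n)

/-! Position `2n+11` is `n`-redundant in every trace of `T^async_n`: in `t₁, t₂` it opens the
last `(1000)^{n+4}` block of `τ₁`, in `t₃, t₄` it is the third valuation of the first
`(1001)^{n+4}` block of `τ₀`, so its `n+1` successors all carry the same valuation. Redundancy
at a position passes to every flattening, and deleting that position from each trace of an
assignment deletes it from the flattening, so `flat Θ` and `flat (f ∘ Θ)` differ by a single
`≈ₙ` step. Hiding `a` commutes with deletion and preserves redundancy. -/

def KXnEquivalent {X : Type} (n k : ℕ) (T T' : Set (ℕ → X → Bool)) : Prop :=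
  ∃ f : ↥T ≃ ↥T',
    (∀ Θ : ℕ → Option ↥T, HasDomCard Θ k → NStutterEquiv n (flat Θ) (flat (mapAssign f Θ))) ∧
    (∀ Θ' : ℕ → Option ↥T', HasDomCard Θ' k →
      NStutterEquiv n (flat Θ') (flat (mapAssign f.symm Θ')))

section Deletion

variable {A : Type} {n i : ℕ}

lemma Redundant.eq_succ {τ : ℕ → A → Bool} (h : Redundant n τ i) : τ i = τ (i + 1) :=
  h 1 le_rfl (by omega)

lemma Redundant.comp {B : Type} {τ : ℕ → A → Bool} (h : Redundant n τ i)
    (φ : (A → Bool) → B → Bool) : Redundant n (fun m => φ (τ m)) i :=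
  fun j hj₁ hj₂ => congrArg φ (h j hj₁ hj₂)

lemma deleteAt_comp {B : Type} (τ : ℕ → A → Bool) (φ : (A → Bool) → B → Bool) :
    deleteAt (fun m => φ (τ m)) i = fun m => φ (deleteAt τ i m) := by
  funext m
  simp only [deleteAt]
  split_ifs <;> rfl

lemma deleteAt_eq_of_ne {s t : ℕ → A → Bool} (h : deleteAt s i = deleteAt t i) {m : ℕ}
    (hm : m ≠ i) : s m = t m := by
  rcases hm.lt_or_gt with hlt | hgt
  · simpa [deleteAt, hlt] using congrFun h m
  · have hm' := congrFun h (m - 1)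
    simp only [deleteAt, if_neg (show ¬m - 1 < i by omega), Nat.sub_add_cancel (by omega : 1 ≤ m)]
      at hm'
    exact hm'

lemma deleteAt_injOn : Set.InjOn (deleteAt · i) {τ : ℕ → A → Bool | τ i = τ (i + 1)} := by
  intro s (hs : s i = s (i + 1)) t (ht : t i = t (i + 1)) h
  funext m
  rcases eq_or_ne m i with rfl | hm
  · rw [hs, ht]
    exact deleteAt_eq_of_ne h (by omega)
  · exact deleteAt_eq_of_ne h hm

end Deletion

section Flattening

variable {X : Type} {T T' : Set (ℕ → X → Bool)} {n i : ℕ}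

lemma redundant_flat (h : ∀ τ ∈ T, Redundant n τ i) (Θ : ℕ → Option ↥T) :
    Redundant n (flat Θ) i := by
  intro j hj₁ hj₂
  funext p
  cases hΘ : Θ p.2 with
  | none => simp [flat, hΘ]
  | some τ => simp [flat, hΘ, h τ τ.2 j hj₁ hj₂]

lemma flat_mapAssign_eq_deleteAt (f : ↥T ≃ ↥T') (hf : ∀ τ, (f τ).1 = deleteAt τ.1 i)
    (Θ : ℕ → Option ↥T) : flat (mapAssign f Θ) = deleteAt (flat Θ) i := by
  funext m p
  by_cases hm : m < i <;> simp only [deleteAt, hm, if_true, if_false] <;>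
    simp only [flat, mapAssign] <;> cases Θ p.2 <;> simp [hf, deleteAt, hm]

lemma mapAssign_mapAssign_symm (f : ↥T ≃ ↥T') (Θ' : ℕ → Option ↥T') :
    mapAssign f (mapAssign f.symm Θ') = Θ' := by
  funext π
  simp [mapAssign, Option.map_map]

theorem kXnEquivalent_image_deleteAt (k : ℕ) (h : ∀ τ ∈ T, Redundant n τ i) :
    KXnEquivalent n k T ((deleteAt · i) '' T) := by
  let f := Equiv.Set.imageOfInjOn _ T (deleteAt_injOn.mono fun τ hτ => (h τ hτ).eq_succ)
  have step (Θ) : StutterStep n (flat (mapAssign f Θ)) (flat Θ) :=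
    ⟨i, redundant_flat h Θ, flat_mapAssign_eq_deleteAt f (fun _ => rfl) Θ⟩
  refine ⟨f, fun Θ _ => .symm _ _ (.rel _ _ (step Θ)), fun Θ' _ => .rel _ _ ?_⟩
  simpa only [mapAssign_mapAssign_symm] using step (mapAssign f.symm Θ')

end Flattening

lemma restrSet_image_deleteAt (T : Set (ℕ → AXYZ → Bool)) (i : ℕ) :
    restrSet ((deleteAt · i) '' T) = (deleteAt · i) '' restrSet T := by
  simp only [restrSet, Set.image_image, deleteAt_comp]

lemma redundant_of_mem_restrSet {T : Set (ℕ → AXYZ → Bool)} {n i : ℕ}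
    (h : ∀ τ ∈ T, Redundant n τ i) : ∀ σ ∈ restrSet T, Redundant n σ i := by
  rintro _ ⟨τ, hτ, rfl⟩
  exact (h τ hτ).comp restr

lemma Tasync'_eq_image (n : ℕ) : Tasync' n = (deleteAt · (2 * n + 11)) '' Tasync n := by
  simp only [Tasync, Tasync', Set.image_insert_eq, Set.image_singleton]
  rfl

lemma ofBlocks_cons_of_lt {c i : ℕ} {v tail : AXYZ → Bool} {rest : List (ℕ × (AXYZ → Bool))}
    (h : i < c) : ofBlocks ((c, v) :: rest) tail i = v :=
  if_pos h

lemma ofBlocks_cons_of_le {c i : ℕ} {v tail : AXYZ → Bool} {rest : List (ℕ × (AXYZ → Bool))}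
    (h : c ≤ i) : ofBlocks ((c, v) :: rest) tail i = ofBlocks rest tail (i - c) :=
  if_neg (Nat.not_lt.mpr h)

lemma redundant_of_mem_Tasync (n : ℕ) : ∀ τ ∈ Tasync n, Redundant n τ (2 * n + 11) := by
  rintro τ (rfl | rfl | rfl | rfl) j hj₁ hj₂ <;>
    simp (disch := omega) only [t1, t2, t3, t4, tau0blocks, tau1blocks, List.cons_append,
      List.nil_append, ofBlocks_cons_of_lt, ofBlocks_cons_of_le]

/-- For all `n, k ∈ ℕ`: `T^async_n` and `T'^async_n` are
`(k, 𝕏ⁿ)`-equivalent, and `T^async_n|_a` and `T'^async_n|_a` are `(k, 𝕏ⁿ)`-equivalent,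
where the witnessing trace equivalence is the `n`-stutter equivalence `≈ₙ`. -/
theorem Tasync_kXn_equiv_Tasync' (n k : ℕ) :
    (∃ f : ↥(Tasync n) ≃ ↥(Tasync' n),
      (∀ Θ : ℕ → Option ↥(Tasync n), HasDomCard Θ k →
        NStutterEquiv n (flat Θ) (flat (mapAssign f Θ))) ∧
      (∀ Θ' : ℕ → Option ↥(Tasync' n), HasDomCard Θ' k →
        NStutterEquiv n (flat Θ') (flat (mapAssign f.symm Θ')))) ∧
    (∃ g : ↥(restrSet (Tasync n)) ≃ ↥(restrSet (Tasync' n)),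
      (∀ Θ : ℕ → Option ↥(restrSet (Tasync n)), HasDomCard Θ k →
        NStutterEquiv n (flat Θ) (flat (mapAssign g Θ))) ∧
      (∀ Θ' : ℕ → Option ↥(restrSet (Tasync' n)), HasDomCard Θ' k →
        NStutterEquiv n (flat Θ') (flat (mapAssign g.symm Θ')))) := by
  show KXnEquivalent n k (Tasync n) (Tasync' n) ∧
    KXnEquivalent n k (restrSet (Tasync n)) (restrSet (Tasync' n))
  have hT := redundant_of_mem_Tasync n
  rw [Tasync'_eq_image, restrSet_image_deleteAt]
  exact ⟨kXnEquivalent_image_deleteAt k hT,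
    kXnEquivalent_image_deleteAt k (redundant_of_mem_restrSet hT)⟩
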